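/- Suppose the constants A^{I,αβ}_{JK} satisfy the null condition A^{I,αβ}_{JK}ξ_αξ_β=0 whenever ξ₀²−ξ₁²−ξ₂²−ξ₃²=0. Then for any N and any sufficiently smooth ℝ^M-valued functions u,v on ℝ₊×ℝ³, at every point with |x|≥1 one has |Z^{≤N}(A^{I,αβ}_{JK}∂_α u^J ∂_β v^K)| ≲ |Z^{≤N}∂̸u||Z^{≤N/2}∂v| + |Z^{≤N/2}∂̸u||Z^{≤N}∂v| + |Z^{≤N}∂u||Z^{≤N/2}∂̸v| + |Z^{≤N/2}∂u||Z^{≤N}∂̸v|, with implicit constant depending only on N and the coefficients A. -/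

import Mathlib

noncomputable section

open MeasureTheory ENNReal Set Filter

/-- Euclidean space ℝ³. -/
abbrev E3 : Type := EuclideanSpace ℝ (Fin 3)

/-- Scalar space-time fields. -/
abbrev SF := ℝ → E3 → ℝ

/-- Time derivative ∂ₜ. -/
def pt (u : SF) : SF := fun t x => deriv (fun s => u s x) t

/-- Spatial derivative ∂ᵢ. -/
def px (i : Fin 3) (u : SF) : SF := fun t x =>
  fderiv ℝ (fun y => u t y) x (EuclideanSpace.single i 1)

/-- Space-time derivatives ∂_α, α = 0,…,3, with ∂₀ = ∂ₜ. -/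
def pd (α : Fin 4) : SF → SF := ![pt, px 0, px 1, px 2] α

/-- Radial derivative ∂ᵣ = (x/r)·∇ₓ. -/
def pr (u : SF) : SF := fun t x => ∑ i, (x i / ‖x‖) * px i u t x

/-- Angular gradient ∇̸ᵢ = ∂ᵢ − (xᵢ/r)∂ᵣ. -/
def pang (i : Fin 3) (u : SF) : SF := fun t x =>
  px i u t x - (x i / ‖x‖) * pr u t x

/-- Good derivatives ∂̸ = (∂ₜ+∂ᵣ, ∇̸). -/
def gd (α : Fin 4) : SF → SF :=
  ![fun u t x => pt u t x + pr u t x, pang 0, pang 1, pang 2] α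

/-- ω = (−1, x/r). -/
def omg (α : Fin 4) (x : E3) : ℝ := ![-1, x 0 / ‖x‖, x 1 / ‖x‖, x 2 / ‖x‖] α

/-- |∂u| for a scalar field. -/
def gradAbs (u : SF) : SF := fun t x => Real.sqrt (∑ α, (pd α u t x) ^ 2)

/-- |∂̸u| for a scalar field. -/
def goodAbs (u : SF) : SF := fun t x => Real.sqrt (∑ α, (gd α u t x) ^ 2)

/-- Rotation vector fields Ω. -/
def rot (i : Fin 3) : SF → SF :=
  ![fun u t x => x 1 * px 2 u t x - x 2 * px 1 u t x,
    fun u t x => x 2 * px 0 u t x - x 0 * px 2 u t x,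
    fun u t x => x 0 * px 1 u t x - x 1 * px 0 u t x] i

/-- The admissible vector fields Z = (∂ₜ, ∂₁, ∂₂, ∂₃, Ω₁, Ω₂, Ω₃). -/
def Zop (a : Fin 7) : SF → SF := ![pt, px 0, px 1, px 2, rot 0, rot 1, rot 2] a

/-- Iterated vector fields Z^μ. -/
def Ziter : List (Fin 7) → SF → SF
  | [] => id
  | a :: l => fun u => Zop a (Ziter l u)

/-- Japanese bracket ⟨r⟩ = √(1+r²). -/
def jr (x : E3) : ℝ := Real.sqrt (1 + ‖x‖ ^ 2)

/-- The d'Alembertian □ = ∂ₜ² − Δ. -/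
def box (u : SF) : SF := fun t x => pt (pt u) t x - ∑ i, px i (px i u) t x

/-- L²ₓ norm. -/
def L2x (f : E3 → ℝ) : ℝ≥0∞ := (∫⁻ x, ENNReal.ofReal ((f x) ^ 2)) ^ (1/2 : ℝ)

/-- ∫₀^∞ ∫_{ℝ³} f dx dt. -/
def IInt (f : SF) : ℝ≥0∞ := ∫⁻ t in Ici (0:ℝ), ∫⁻ x, ENNReal.ofReal (f t x)

/-- Mixed L²ₜL²ₓ norm over [0,∞)×ℝ³. -/
def L2L2 (f : SF) : ℝ≥0∞ := (IInt (fun t x => (f t x) ^ 2)) ^ (1/2 : ℝ)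

/-- Mixed L^∞ₜL²ₓ norm over [0,∞)×ℝ³. -/
def LinfL2 (f : SF) : ℝ≥0∞ := ⨆ t ∈ Ici (0:ℝ), L2x (f t)

/-- Local energy norm ‖·‖_{LE}. -/
def LEnorm (f : SF) : ℝ≥0∞ :=
  ⨆ R ∈ Ici (1:ℝ),
    ENNReal.ofReal (R ^ (-(2:ℝ)⁻¹)) *
      (∫⁻ t in Ici (0:ℝ), ∫⁻ x in {x : E3 | R / 2 ≤ jr x ∧ jr x ≤ R},
        ENNReal.ofReal ((f t x) ^ 2)) ^ (1/2 : ℝ)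

/-- Component of a vector-valued field. -/
def comp {M : ℕ} (u : ℝ → E3 → Fin M → ℝ) (I : Fin M) : SF := fun t x => u t x I

/-- |u| for vector-valued fields. -/
def vAbs {M : ℕ} (u : ℝ → E3 → Fin M → ℝ) : SF := fun t x => ∑ I, |u t x I|

/-- |∂u| for vector-valued fields. -/
def vGradAbs {M : ℕ} (u : ℝ → E3 → Fin M → ℝ) : SF := fun t x =>
  ∑ I, gradAbs (comp u I) t x

/-- |∂̸u| for vector-valued fields. -/
def vGoodAbs {M : ℕ} (u : ℝ → E3 → Fin M → ℝ) : SF := fun t x =>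
  ∑ I, goodAbs (comp u I) t x

/-- |∂∂u| for vector-valued fields. -/
def vGrad2Abs {M : ℕ} (u : ℝ → E3 → Fin M → ℝ) : SF := fun t x =>
  ∑ I, Real.sqrt (∑ α, ∑ β, (pd α (pd β (comp u I)) t x) ^ 2)

/-- ‖u‖_{LE¹} = ‖(∂u, u/r)‖_{LE} for vector-valued fields. -/
def vLE1 {M : ℕ} (u : ℝ → E3 → Fin M → ℝ) : ℝ≥0∞ :=
  LEnorm (fun t x => vGradAbs u t x + vAbs u t x / ‖x‖)

/-- (□_h u)^I = (∂ₜ²−Δ)u^I + h^{I,αβ}_K ∂_α∂_β u^K. -/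
def boxh {M : ℕ} (h : Fin M → Fin M → Fin 4 → Fin 4 → SF)
    (u : ℝ → E3 → Fin M → ℝ) (I : Fin M) : SF := fun t x =>
  box (comp u I) t x + ∑ K, ∑ α, ∑ β, h I K α β t x * pd α (pd β (comp u K)) t x

/-- |□_h u|. -/
def vBoxhAbs {M : ℕ} (h : Fin M → Fin M → Fin 4 → Fin 4 → SF)
    (u : ℝ → E3 → Fin M → ℝ) : SF := fun t x => ∑ I, |boxh h u I t x|

/-- |h| = Σ_{I,K,α,β} |h^{I,αβ}_K|. -/
def habs {M : ℕ} (h : Fin M → Fin M → Fin 4 → Fin 4 → SF) : SF := fun t x =>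
  ∑ I, ∑ K, ∑ α, ∑ β, |h I K α β t x|

/-- |∂h|. -/
def hGradAbs {M : ℕ} (h : Fin M → Fin M → Fin 4 → Fin 4 → SF) : SF := fun t x =>
  ∑ I, ∑ K, ∑ α, ∑ β, gradAbs (h I K α β) t x

/-- |∂̸h|. -/
def hGoodAbs {M : ℕ} (h : Fin M → Fin M → Fin 4 → Fin 4 → SF) : SF := fun t x =>
  ∑ I, ∑ K, ∑ α, ∑ β, goodAbs (h I K α β) t x

/-- The contraction ω_αω_β h^{I,αβ}_K. -/
def hOmg {M : ℕ} (h : Fin M → Fin M → Fin 4 → Fin 4 → SF) (I K : Fin M) : SF :=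
  fun t x => ∑ α, ∑ β, omg α x * omg β x * h I K α β t x

/-- |∂(ω_αω_β h^{αβ})|. -/
def hOmgGradAbs {M : ℕ} (h : Fin M → Fin M → Fin 4 → Fin 4 → SF) : SF := fun t x =>
  ∑ I, ∑ K, gradAbs (hOmg h I K) t x

/-- |h^{αβ}ω_αω_β|. -/
def hOmgAbs {M : ℕ} (h : Fin M → Fin M → Fin 4 → Fin 4 → SF) : SF := fun t x =>
  ∑ I, ∑ K, |hOmg h I K t x|

/-- Symmetry h^{I,αβ}_K = h^{K,αβ}_I = h^{I,βα}_K. -/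
def hSymm {M : ℕ} (h : Fin M → Fin M → Fin 4 → Fin 4 → SF) : Prop :=
  ∀ I K α β, h I K α β = h K I α β ∧ h I K α β = h I K β α

/-- |Z^{≤N} u| (scalar). -/
def ZleAbs (N : ℕ) (u : SF) : SF := fun t x =>
  ∑ n ∈ Finset.range (N+1), ∑ μ : Fin n → Fin 7, |Ziter (List.ofFn μ) u t x|

/-- |Z^{≤N} u| (vector-valued). -/
def ZleAbsV {M : ℕ} (N : ℕ) (u : ℝ → E3 → Fin M → ℝ) : SF := fun t x =>
  ∑ n ∈ Finset.range (N+1), ∑ μ : Fin n → Fin 7, ∑ I,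
    |Ziter (List.ofFn μ) (comp u I) t x|

/-- |∂ Z^{≤N} u|. -/
def gradZleV {M : ℕ} (N : ℕ) (u : ℝ → E3 → Fin M → ℝ) : SF := fun t x =>
  ∑ n ∈ Finset.range (N+1), ∑ μ : Fin n → Fin 7, ∑ I,
    gradAbs (Ziter (List.ofFn μ) (comp u I)) t x

/-- |∂̸ Z^{≤N} u|. -/
def goodZleV {M : ℕ} (N : ℕ) (u : ℝ → E3 → Fin M → ℝ) : SF := fun t x =>
  ∑ n ∈ Finset.range (N+1), ∑ μ : Fin n → Fin 7, ∑ I,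
    goodAbs (Ziter (List.ofFn μ) (comp u I)) t x

/-- |Z^{≤N} ∂ u| (Z applied to the components of ∂u). -/
def ZgradAfter {M : ℕ} (N : ℕ) (u : ℝ → E3 → Fin M → ℝ) : SF := fun t x =>
  ∑ n ∈ Finset.range (N+1), ∑ μ : Fin n → Fin 7, ∑ I,
    Real.sqrt (∑ α, (Ziter (List.ofFn μ) (pd α (comp u I)) t x) ^ 2)

/-- |Z^{≤N} ∂̸ u| (Z applied to the components of ∂̸u). -/
def ZgoodAfter {M : ℕ} (N : ℕ) (u : ℝ → E3 → Fin M → ℝ) : SF := fun t x =>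
  ∑ n ∈ Finset.range (N+1), ∑ μ : Fin n → Fin 7, ∑ I,
    Real.sqrt (∑ α, (Ziter (List.ofFn μ) (gd α (comp u I)) t x) ^ 2)

/-- ‖Z^{≤N}u‖_{LE¹}. -/
def vZleLE1 {M : ℕ} (N : ℕ) (u : ℝ → E3 → Fin M → ℝ) : ℝ≥0∞ :=
  LEnorm (fun t x => gradZleV N u t x + ZleAbsV N u t x / ‖x‖)

/-- |□_h Z^{≤N} u|. -/
def boxhZleV {M : ℕ} (h : Fin M → Fin M → Fin 4 → Fin 4 → SF) (N : ℕ)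
    (u : ℝ → E3 → Fin M → ℝ) : SF := fun t x =>
  ∑ n ∈ Finset.range (N+1), ∑ μ : Fin n → Fin 7, ∑ I,
    |box (Ziter (List.ofFn μ) (comp u I)) t x +
      ∑ K, ∑ α, ∑ β, h I K α β t x * pd α (pd β (Ziter (List.ofFn μ) (comp u K))) t x|

/-- |Z^{≤N} h|. -/
def hZleAbs {M : ℕ} (N : ℕ) (h : Fin M → Fin M → Fin 4 → Fin 4 → SF) : SF := fun t x =>
  ∑ n ∈ Finset.range (N+1), ∑ μ : Fin n → Fin 7, ∑ I, ∑ K, ∑ α, ∑ β,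
    |Ziter (List.ofFn μ) (h I K α β) t x|

/-- |Z^{≤N} ∂̸ h|. -/
def hZleGoodAbs {M : ℕ} (N : ℕ) (h : Fin M → Fin M → Fin 4 → Fin 4 → SF) : SF := fun t x =>
  ∑ n ∈ Finset.range (N+1), ∑ μ : Fin n → Fin 7, ∑ I, ∑ K, ∑ α, ∑ β,
    Real.sqrt (∑ c, (Ziter (List.ofFn μ) (gd c (h I K α β)) t x) ^ 2)

/-- |Z^{≤N} (ω_αω_β h^{αβ})|. -/
def hOmgZleAbs {M : ℕ} (N : ℕ) (h : Fin M → Fin M → Fin 4 → Fin 4 → SF) : SF := fun t x =>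
  ∑ n ∈ Finset.range (N+1), ∑ μ : Fin n → Fin 7, ∑ I, ∑ K,
    |Ziter (List.ofFn μ) (hOmg h I K) t x|

/-- The smallness assumption (2.13) on h, with weight p̃ and bound δ. -/
def hAssumptions {M : ℕ} (h : Fin M → Fin M → Fin 4 → Fin 4 → SF) (pt' δ : ℝ) : Prop :=
  LinfL2 (hZleAbs 3 h)
    + L2L2 (fun t x => jr x ^ ((pt' - 1)/2) * hZleGoodAbs 2 h t x)
    + L2L2 (fun t x => jr x ^ ((pt' - 1)/2) * hOmgZleAbs 3 h t x)
    ≤ ENNReal.ofReal δ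

/-- Spatial derivatives on ℝ³. -/
def pxs (i : Fin 3) (f : E3 → ℝ) : E3 → ℝ := fun x =>
  fderiv ℝ f x (EuclideanSpace.single i 1)

/-- Iterated spatial derivatives ∂^μ on ℝ³. -/
def pxsIter : List (Fin 3) → (E3 → ℝ) → (E3 → ℝ)
  | [] => id
  | i :: l => fun f => pxs i (pxsIter l f)

/-- Spatial rotation vector fields on ℝ³. -/
def rotS (i : Fin 3) : (E3 → ℝ) → (E3 → ℝ) :=
  ![fun f x => x 1 * pxs 2 f x - x 2 * pxs 1 f x,
    fun f x => x 2 * pxs 0 f x - x 0 * pxs 2 f x,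
    fun f x => x 0 * pxs 1 f x - x 1 * pxs 0 f x] i

/-- Spatial admissible vector fields (∂₁,∂₂,∂₃,Ω₁,Ω₂,Ω₃) on ℝ³. -/
def ZopS (a : Fin 6) : (E3 → ℝ) → (E3 → ℝ) :=
  ![pxs 0, pxs 1, pxs 2, rotS 0, rotS 1, rotS 2] a

/-- Iterated spatial admissible vector fields. -/
def ZiterS : List (Fin 6) → (E3 → ℝ) → (E3 → ℝ)
  | [] => id
  | a :: l => fun f => ZopS a (ZiterS l f)

/-- |Z^{≤N} f| on ℝ³. -/
def ZleAbsS (N : ℕ) (f : E3 → ℝ) : E3 → ℝ := fun x =>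
  ∑ n ∈ Finset.range (N+1), ∑ μ : Fin n → Fin 6, |ZiterS (List.ofFn μ) f x|

/-!
Writing `∂_α = ∂̸_α + ω_α ∂_r` with `ω = (-1, x / r)`, the null condition kills the term
`A^{αβ} ω_α ω_β ∂_r u ∂_r v`, so `A^{αβ} ∂_α u ∂_β v` is a sum of terms `c(x) (∂̸u)(∂v)` and
`c(x) (∂u)(∂̸v)` with coefficients in the algebra generated by `xᵢ / r` and `1 / r`. That algebra
is bounded for `r ≥ 1` and stable under the `Z`'s, whose spatial parts are Killing fields. By
Leibniz's rule `Z^μ` of each term is then a bounded combination of products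
`Z^{ν₁}(∂̸u) Z^{ν₂}(∂v)` with `|ν₁| + |ν₂| ≤ |μ|`, and one of `ν₁`, `ν₂` has length at most `N / 2`.
-/

open scoped ContDiff RealInnerProductSpace

/-- Smoothness of a field away from the time axis `x = 0`, where `x / ‖x‖` is smooth. -/
def SmoothOffAxis (g : SF) : Prop :=
  ContDiffOn ℝ ∞ (Function.uncurry g) {p : ℝ × E3 | p.2 ≠ 0}

lemma isOpen_offAxis : IsOpen {p : ℝ × E3 | p.2 ≠ 0} :=
  isOpen_compl_singleton.preimage continuous_snd

lemma SmoothOffAxis.differentiableAt {g : SF} (hg : SmoothOffAxis g) {t : ℝ} {x : E3}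
    (hx : x ≠ 0) : DifferentiableAt ℝ (Function.uncurry g) (t, x) :=
  (hg.contDiffAt (isOpen_offAxis.mem_nhds hx)).differentiableAt (by simp)

def zVec (a : Fin 7) (x : E3) : ℝ × E3 :=
  let e : Fin 3 → E3 := fun i => EuclideanSpace.single i 1
  ![(1, 0), (0, e 0), (0, e 1), (0, e 2),
    (0, x 1 • e 2 - x 2 • e 1), (0, x 2 • e 0 - x 0 • e 2), (0, x 0 • e 1 - x 1 • e 0)] a

lemma pt_eq_fderiv {g : SF} {t : ℝ} {x : E3}
    (hg : DifferentiableAt ℝ (Function.uncurry g) (t, x)) :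
    pt g t x = fderiv ℝ (Function.uncurry g) (t, x) (1, 0) :=
  (hg.hasFDerivAt.comp_hasDerivAt (f := fun s : ℝ => (s, x)) t
    ((hasDerivAt_id t).prodMk (hasDerivAt_const t x))).deriv

lemma px_eq_fderiv {g : SF} {t : ℝ} {x : E3}
    (hg : DifferentiableAt ℝ (Function.uncurry g) (t, x)) (i : Fin 3) :
    px i g t x = fderiv ℝ (Function.uncurry g) (t, x) (0, EuclideanSpace.single i 1) := by
  have h : HasFDerivAt (fun y => g t y) _ x :=
    hg.hasFDerivAt.comp x ((hasFDerivAt_const t x).prodMk (hasFDerivAt_id x))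
  rw [px, h.fderiv]
  simp

lemma Zop_eq_fderiv {g : SF} {t : ℝ} {x : E3}
    (hg : DifferentiableAt ℝ (Function.uncurry g) (t, x)) (a : Fin 7) :
    Zop a g t x = fderiv ℝ (Function.uncurry g) (t, x) (zVec a x) := by
  have hrot : ∀ i j : Fin 3, x i * px j g t x - x j * px i g t x =
      fderiv ℝ (Function.uncurry g) (t, x)
        (0, x i • EuclideanSpace.single j 1 - x j • EuclideanSpace.single i 1) := by
    intro i j
    have : ((0 : ℝ), x i • EuclideanSpace.single j (1 : ℝ) - x j • EuclideanSpace.single i 1) =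
        x i • ((0 : ℝ), EuclideanSpace.single j (1 : ℝ))
          - x j • (0, EuclideanSpace.single i 1) := by
      simp
    rw [this, map_sub, map_smul, map_smul, px_eq_fderiv hg, px_eq_fderiv hg, smul_eq_mul,
      smul_eq_mul]
  fin_cases a
  · exact pt_eq_fderiv hg
  · exact px_eq_fderiv hg 0
  · exact px_eq_fderiv hg 1
  · exact px_eq_fderiv hg 2
  · exact hrot 1 2
  · exact hrot 2 0
  · exact hrot 0 1

lemma contDiff_zVec (a : Fin 7) : ContDiff ℝ ∞ (zVec a) := by
  fin_cases a <;>
    (unfold zVec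
     dsimp only [Fin.zero_eta, Fin.mk_one, Fin.reduceFinMk, Matrix.cons_val_zero,
       Matrix.cons_val_one, Matrix.cons_val]
     fun_prop)

namespace SmoothOffAxis

variable {f g : SF}

lemma zop (hg : SmoothOffAxis g) (a : Fin 7) : SmoothOffAxis (Zop a g) := by
  have hD : ContDiffOn ℝ ∞ (fun p : ℝ × E3 => fderiv ℝ (Function.uncurry g) p (zVec a p.2))
      {p | p.2 ≠ 0} :=
    ((contDiffOn_infty_iff_fderiv_of_isOpen isOpen_offAxis).1 hg).2.clm_apply
      ((contDiff_zVec a).comp contDiff_snd).contDiffOn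
  exact hD.congr fun p hp => Zop_eq_fderiv (hg.differentiableAt hp) a

lemma ziter (hg : SmoothOffAxis g) (l : List (Fin 7)) : SmoothOffAxis (Ziter l g) := by
  induction l with
  | nil => exact hg
  | cons a l ih => exact ih.zop a

lemma add (hf : SmoothOffAxis f) (hg : SmoothOffAxis g) :
    SmoothOffAxis fun t x => f t x + g t x :=
  ContDiffOn.add hf hg

lemma sub (hf : SmoothOffAxis f) (hg : SmoothOffAxis g) :
    SmoothOffAxis fun t x => f t x - g t x :=
  ContDiffOn.sub hf hg

lemma mul (hf : SmoothOffAxis f) (hg : SmoothOffAxis g) :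
    SmoothOffAxis fun t x => f t x * g t x :=
  ContDiffOn.mul hf hg

lemma sum {ι : Type*} (s : Finset ι) {F : ι → SF} (hF : ∀ i ∈ s, SmoothOffAxis (F i)) :
    SmoothOffAxis fun t x => ∑ i ∈ s, F i t x :=
  ContDiffOn.sum hF

end SmoothOffAxis

section LeibnizRules

variable {f g : SF} {t : ℝ} {x : E3}

lemma Zop_mul (a : Fin 7) (hf : SmoothOffAxis f) (hg : SmoothOffAxis g) (hx : x ≠ 0) :
    Zop a (fun t x => f t x * g t x) t x = Zop a f t x * g t x + f t x * Zop a g t x := by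
  have hf' := hf.differentiableAt (t := t) hx
  have hg' := hg.differentiableAt (t := t) hx
  rw [Zop_eq_fderiv ((hf.mul hg).differentiableAt hx), Zop_eq_fderiv hf', Zop_eq_fderiv hg']
  change fderiv ℝ (fun p => Function.uncurry f p * Function.uncurry g p) (t, x) _ = _
  rw [fderiv_fun_mul hf' hg']
  simp only [add_apply, smul_apply, smul_eq_mul, Function.uncurry_apply_pair]
  ring

lemma Zop_zero (a : Fin 7) : Zop a (fun _ _ => 0) t x = 0 := by
  rw [Zop_eq_fderiv (differentiableAt_const (0 : ℝ))]
  change fderiv ℝ (fun _ : ℝ × E3 => (0 : ℝ)) (t, x) (zVec a x) = 0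
  simp

lemma Zop_add (a : Fin 7) (hf : SmoothOffAxis f) (hg : SmoothOffAxis g) (hx : x ≠ 0) :
    Zop a (fun t x => f t x + g t x) t x = Zop a f t x + Zop a g t x := by
  have hf' := hf.differentiableAt (t := t) hx
  have hg' := hg.differentiableAt (t := t) hx
  rw [Zop_eq_fderiv ((hf.add hg).differentiableAt hx), Zop_eq_fderiv hf', Zop_eq_fderiv hg']
  change fderiv ℝ (fun p => Function.uncurry f p + Function.uncurry g p) (t, x) _ = _
  rw [fderiv_fun_add hf' hg', add_apply]

lemma Zop_sum (a : Fin 7) {ι : Type*} (s : Finset ι) {F : ι → SF}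
    (hF : ∀ i ∈ s, SmoothOffAxis (F i)) (hx : x ≠ 0) :
    Zop a (fun t x => ∑ i ∈ s, F i t x) t x = ∑ i ∈ s, Zop a (F i) t x := by
  have hF' := fun i hi => (hF i hi).differentiableAt (t := t) hx
  rw [Zop_eq_fderiv ((SmoothOffAxis.sum s hF).differentiableAt hx)]
  change fderiv ℝ (fun p => ∑ i ∈ s, Function.uncurry (F i) p) (t, x) _ = _
  rw [fderiv_fun_sum hF', sum_apply]
  exact Finset.sum_congr rfl fun i hi => (Zop_eq_fderiv (hF' i hi) a).symm

lemma Zop_congr (a : Fin 7) (hf : SmoothOffAxis f) (hg : SmoothOffAxis g)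
    (hfg : ∀ t x, x ≠ 0 → f t x = g t x) (hx : x ≠ 0) : Zop a f t x = Zop a g t x := by
  have heq : Function.uncurry f =ᶠ[nhds (t, x)] Function.uncurry g :=
    Filter.mem_of_superset (isOpen_offAxis.mem_nhds hx) fun p hp => hfg p.1 p.2 hp
  rw [Zop_eq_fderiv (hf.differentiableAt hx), Zop_eq_fderiv (hg.differentiableAt hx),
    heq.fderiv_eq]

lemma Ziter_congr (l : List (Fin 7)) (hf : SmoothOffAxis f) (hg : SmoothOffAxis g)
    (hfg : ∀ t x, x ≠ 0 → f t x = g t x) (hx : x ≠ 0) : Ziter l f t x = Ziter l g t x := by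
  induction l generalizing t x with
  | nil => exact hfg t x hx
  | cons a l ih => exact Zop_congr a (hf.ziter l) (hg.ziter l) (fun t x hx => ih hx) hx

lemma Ziter_sum (l : List (Fin 7)) {ι : Type*} (s : Finset ι) {F : ι → SF}
    (hF : ∀ i ∈ s, SmoothOffAxis (F i)) (hx : x ≠ 0) :
    Ziter l (fun t x => ∑ i ∈ s, F i t x) t x = ∑ i ∈ s, Ziter l (F i) t x := by
  induction l generalizing t x with
  | nil => rfl
  | cons a l ih =>
    exact (Zop_congr a ((SmoothOffAxis.sum s hF).ziter l)
      (SmoothOffAxis.sum s fun i hi => (hF i hi).ziter l) (fun t x hx => ih hx) hx).trans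
      (Zop_sum a s (fun i hi => (hF i hi).ziter l) hx)

end LeibnizRules

lemma hasFDerivAt_norm {F : Type*} [NormedAddCommGroup F] [InnerProductSpace ℝ F] {x : F}
    (hx : x ≠ 0) : HasFDerivAt (fun y : F => ‖y‖) (‖x‖⁻¹ • innerSL ℝ x) x := by
  have hn : ‖x‖ ≠ 0 := norm_ne_zero_iff.2 hx
  have h := (hasStrictFDerivAt_norm_sq x).hasFDerivAt.sqrt (pow_ne_zero 2 hn)
  simp only [Real.sqrt_sq (norm_nonneg _)] at h
  convert h using 1
  ext w
  simp only [smul_apply, coe_innerSL_apply, smul_eq_mul, one_div, mul_inv_rev, two_smul,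
    smul_add, add_apply]
  field_simp
  ring

section Derivatives

variable {x : E3}

lemma fderiv_inv_norm_apply (hx : x ≠ 0) (w : E3) :
    fderiv ℝ (fun y : E3 => ‖y‖⁻¹) x w = -(⟪x, w⟫ / ‖x‖) * ‖x‖⁻¹ * ‖x‖⁻¹ := by
  have hn : ‖x‖ ≠ 0 := norm_ne_zero_iff.2 hx
  have h : HasFDerivAt (fun y : E3 => ‖y‖⁻¹) _ x :=
    (hasDerivAt_inv hn).comp_hasFDerivAt x (hasFDerivAt_norm hx)
  rw [h.fderiv]
  simp only [neg_smul, neg_apply, smul_apply, coe_innerSL_apply, smul_eq_mul, neg_mul, neg_inj]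
  field_simp

lemma fderiv_coord_div_norm_apply (hx : x ≠ 0) (i : Fin 3) (w : E3) :
    fderiv ℝ (fun y : E3 => y i / ‖y‖) x w
      = w i / ‖x‖ - x i / ‖x‖ * (⟪x, w⟫ / ‖x‖) * ‖x‖⁻¹ := by
  have hn : ‖x‖ ≠ 0 := norm_ne_zero_iff.2 hx
  have h : HasFDerivAt (fun y : E3 => y i * ‖y‖⁻¹) _ x :=
    (EuclideanSpace.proj (𝕜 := ℝ) i).hasFDerivAt.mul
      ((hasDerivAt_inv hn).comp_hasFDerivAt x (hasFDerivAt_norm hx))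
  simp only [div_eq_mul_inv]
  rw [h.fderiv]
  simp only [PiLp.proj_apply, neg_smul, smul_neg, add_apply, neg_apply, smul_apply,
    coe_innerSL_apply, smul_eq_mul]
  field_simp
  ring

end Derivatives

/-- `1 / r` is a generator because `∂ⱼ (xᵢ / r) = (δᵢⱼ - ωᵢ ωⱼ) / r`. -/
inductive IsCoeff : (E3 → ℝ) → Prop
  | const (r : ℝ) : IsCoeff fun _ => r
  | coord_div_norm (i : Fin 3) : IsCoeff fun x => x i / ‖x‖
  | inv_norm : IsCoeff fun x => ‖x‖⁻¹
  | add {c d : E3 → ℝ} : IsCoeff c → IsCoeff d → IsCoeff fun x => c x + d x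
  | mul {c d : E3 → ℝ} : IsCoeff c → IsCoeff d → IsCoeff fun x => c x * d x

namespace IsCoeff

variable {c : E3 → ℝ}

lemma sub {d : E3 → ℝ} (hc : IsCoeff c) (hd : IsCoeff d) : IsCoeff fun x => c x - d x := by
  simpa [sub_eq_add_neg] using hc.add ((const (-1)).mul hd)

lemma sum {ι : Type*} (s : Finset ι) {c : ι → E3 → ℝ} (hc : ∀ i ∈ s, IsCoeff (c i)) :
    IsCoeff fun x => ∑ i ∈ s, c i x := by
  classical
  induction s using Finset.induction_on with
  | empty => simpa using const 0
  | insert j s hj ih =>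
    simpa [Finset.sum_insert hj] using (hc j (by simp)).add (ih fun i hi => hc i (by simp [hi]))

lemma contDiffOn (hc : IsCoeff c) : ContDiffOn ℝ ∞ c {x | x ≠ 0} := by
  have hnorm : ContDiffOn ℝ ∞ (fun x : E3 => ‖x‖) {x | x ≠ 0} :=
    contDiffOn_id.norm ℝ fun _ hx => hx
  induction hc with
  | const r => exact contDiffOn_const
  | coord_div_norm i =>
    exact (EuclideanSpace.proj (𝕜 := ℝ) i).contDiff.contDiffOn.div hnorm
      fun _ hx => norm_ne_zero_iff.2 hx
  | inv_norm => exact hnorm.inv fun _ hx => norm_ne_zero_iff.2 hx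
  | add _ _ ihc ihd => exact ihc.add ihd
  | mul _ _ ihc ihd => exact ihc.mul ihd

lemma differentiableAt (hc : IsCoeff c) {x : E3} (hx : x ≠ 0) : DifferentiableAt ℝ c x :=
  (hc.contDiffOn.contDiffAt (isOpen_compl_singleton.mem_nhds hx)).differentiableAt (by simp)

lemma smoothOffAxis (hc : IsCoeff c) : SmoothOffAxis fun _ x => c x :=
  hc.contDiffOn.comp contDiff_snd.contDiffOn fun _ hp => hp

lemma exists_bound (hc : IsCoeff c) : ∃ B, 0 ≤ B ∧ ∀ x : E3, 1 ≤ ‖x‖ → |c x| ≤ B := by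
  induction hc with
  | const r => exact ⟨|r|, abs_nonneg r, fun _ _ => le_rfl⟩
  | coord_div_norm i =>
    refine ⟨1, zero_le_one, fun x _ => ?_⟩
    rw [abs_div, abs_norm]
    exact div_le_one_of_le₀ (by simpa using PiLp.norm_apply_le x i) (norm_nonneg x)
  | inv_norm =>
    exact ⟨1, zero_le_one, fun x hx => by rw [abs_inv, abs_norm]; exact inv_le_one_of_one_le₀ hx⟩
  | add _ _ ihc ihd =>
    obtain ⟨B, hB, hc⟩ := ihc
    obtain ⟨B', hB', hd⟩ := ihd
    exact ⟨B + B', by positivity, fun x hx =>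
      (abs_add_le _ _).trans (add_le_add (hc x hx) (hd x hx))⟩
  | mul _ _ ihc ihd =>
    obtain ⟨B, hB, hc⟩ := ihc
    obtain ⟨B', hB', hd⟩ := ihd
    exact ⟨B * B', by positivity, fun x hx => by
      rw [abs_mul]; exact mul_le_mul (hc x hx) (hd x hx) (abs_nonneg _) hB⟩

lemma exists_fderiv_eq (hc : IsCoeff c) (w : E3 → E3)
    (hw : ∀ i, IsCoeff fun x => w x i / ‖x‖) (hw' : IsCoeff fun x => ⟪x, w x⟫ / ‖x‖) :
    ∃ d, IsCoeff d ∧ ∀ x, x ≠ 0 → fderiv ℝ c x (w x) = d x := by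
  induction hc with
  | const r => exact ⟨fun _ => 0, const 0, fun x _ => by simp⟩
  | coord_div_norm i =>
    exact ⟨_, (hw i).sub (((coord_div_norm i).mul hw').mul inv_norm),
      fun x hx => fderiv_coord_div_norm_apply hx i (w x)⟩
  | inv_norm =>
    exact ⟨_, (((const (-1)).mul hw').mul inv_norm).mul inv_norm,
      fun x hx => by rw [fderiv_inv_norm_apply hx]; ring⟩
  | @add c d hc hd ihc ihd =>
    obtain ⟨c', hc', hc'e⟩ := ihc
    obtain ⟨d', hd', hd'e⟩ := ihd
    refine ⟨_, hc'.add hd', fun x hx => ?_⟩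
    rw [fderiv_fun_add (hc.differentiableAt hx) (hd.differentiableAt hx), add_apply,
      hc'e x hx, hd'e x hx]
  | @mul c d hc hd ihc ihd =>
    obtain ⟨c', hc', hc'e⟩ := ihc
    obtain ⟨d', hd', hd'e⟩ := ihd
    refine ⟨_, (hc.mul hd').add (hd.mul hc'), fun x hx => ?_⟩
    rw [fderiv_fun_mul (hc.differentiableAt hx) (hd.differentiableAt hx), add_apply,
      smul_apply, smul_apply, hc'e x hx, hd'e x hx, smul_eq_mul, smul_eq_mul]

lemma exists_fderiv_single_eq (j : Fin 3) (hc : IsCoeff c) :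
    ∃ d, IsCoeff d ∧ ∀ x, x ≠ 0 → fderiv ℝ c x (EuclideanSpace.single j 1) = d x := by
  refine hc.exists_fderiv_eq (fun _ => EuclideanSpace.single j 1) (fun i => ?_) ?_
  · simpa [div_eq_mul_inv] using (const (EuclideanSpace.single j (1 : ℝ) i)).mul inv_norm
  · simpa [EuclideanSpace.inner_single_right] using coord_div_norm j

lemma exists_fderiv_rot_eq (p q : Fin 3) (hc : IsCoeff c) :
    ∃ d, IsCoeff d ∧ ∀ x : E3, x ≠ 0 →
      fderiv ℝ c x (x p • EuclideanSpace.single q 1 - x q • EuclideanSpace.single p 1) = d x := by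
  refine hc.exists_fderiv_eq _ (fun i => ?_) ?_
  · convert ((const (EuclideanSpace.single q (1 : ℝ) i)).mul (coord_div_norm p)).sub
      ((const (EuclideanSpace.single p (1 : ℝ) i)).mul (coord_div_norm q)) using 2 with x
    simp only [PiLp.sub_apply, PiLp.smul_apply, smul_eq_mul]
    ring
  · convert const 0 using 2 with x
    simp only [inner_sub_right, inner_smul_right, EuclideanSpace.inner_single_right]
    simp [mul_comm]

lemma exists_Zop_eq (a : Fin 7) (hc : IsCoeff c) :
    ∃ d, IsCoeff d ∧ ∀ t x, x ≠ 0 → Zop a (fun _ y => c y) t x = d x := by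
  have hZ : ∀ t x, x ≠ 0 → Zop a (fun _ y => c y) t x = fderiv ℝ c x (zVec a x).2 := by
    intro t x hx
    have h : HasFDerivAt (Function.uncurry fun (_ : ℝ) y => c y)
        ((fderiv ℝ c x).comp (ContinuousLinearMap.snd ℝ ℝ E3)) (t, x) :=
      (hc.differentiableAt hx).hasFDerivAt.comp (t, x) hasFDerivAt_snd
    rw [Zop_eq_fderiv h.differentiableAt, h.fderiv]
    rfl
  suffices ∃ d, IsCoeff d ∧ ∀ x, x ≠ 0 → fderiv ℝ c x (zVec a x).2 = d x by
    obtain ⟨d, hd, hde⟩ := this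
    exact ⟨d, hd, fun t x hx => (hZ t x hx).trans (hde x hx)⟩
  fin_cases a
  · exact ⟨fun _ => 0, const 0, fun x _ => by simp [zVec]⟩
  · exact hc.exists_fderiv_single_eq 0
  · exact hc.exists_fderiv_single_eq 1
  · exact hc.exists_fderiv_single_eq 2
  · exact hc.exists_fderiv_rot_eq 1 2
  · exact hc.exists_fderiv_rot_eq 2 0
  · exact hc.exists_fderiv_rot_eq 0 1

end IsCoeff

structure LeibnizTerm where
  coeff : E3 → ℝ
  left : List (Fin 7)
  right : List (Fin 7)

namespace LeibnizTerm

def eval (T : LeibnizTerm) (f g : SF) : SF :=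
  fun t x => T.coeff x * (Ziter T.left f t x * Ziter T.right g t x)

def IsAdmissible (n : ℕ) (T : LeibnizTerm) : Prop :=
  IsCoeff T.coeff ∧ T.left.length + T.right.length ≤ n

variable {T : LeibnizTerm} {f g : SF}

lemma smoothOffAxis_eval (hT : IsCoeff T.coeff) (hf : SmoothOffAxis f)
    (hg : SmoothOffAxis g) : SmoothOffAxis (T.eval f g) :=
  hT.smoothOffAxis.mul ((hf.ziter _).mul (hg.ziter _))

lemma exists_Zop_eval_eq (a : Fin 7) (hT : IsCoeff T.coeff) :
    ∃ d, IsCoeff d ∧ ∀ f g, SmoothOffAxis f → SmoothOffAxis g → ∀ t x, x ≠ 0 →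
      Zop a (T.eval f g) t x = (⟨d, T.left, T.right⟩ : LeibnizTerm).eval f g t x
        + (⟨T.coeff, a :: T.left, T.right⟩ : LeibnizTerm).eval f g t x
        + (⟨T.coeff, T.left, a :: T.right⟩ : LeibnizTerm).eval f g t x := by
  obtain ⟨d, hd, hde⟩ := hT.exists_Zop_eq a
  refine ⟨d, hd, fun f g hf hg t x hx => ?_⟩
  have hf' := hf.ziter T.left
  have hg' := hg.ziter T.right
  change Zop a (fun t x => T.coeff x * (Ziter T.left f t x * Ziter T.right g t x)) t x = _
  rw [Zop_mul a hT.smoothOffAxis (hf'.mul hg') hx, Zop_mul a hf' hg' hx, hde t x hx]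
  simp only [eval, Ziter]
  ring

end LeibnizTerm

def leibnizSum (L : List LeibnizTerm) (f g : SF) : SF :=
  fun t x => (L.map fun T => T.eval f g t x).sum

section LeibnizSum

variable {f g : SF}

lemma leibnizSum_cons (T : LeibnizTerm) (L : List LeibnizTerm) :
    leibnizSum (T :: L) f g = fun t x => T.eval f g t x + leibnizSum L f g t x := rfl

lemma smoothOffAxis_leibnizSum {L : List LeibnizTerm} (hL : ∀ T ∈ L, IsCoeff T.coeff)
    (hf : SmoothOffAxis f) (hg : SmoothOffAxis g) : SmoothOffAxis (leibnizSum L f g) := by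
  induction L with
  | nil => exact contDiffOn_const
  | cons T L ih =>
    rw [leibnizSum_cons]
    exact (T.smoothOffAxis_eval (hL T (by simp)) hf hg).add (ih fun T' hT' => hL T' (by simp [hT']))

lemma exists_Zop_leibnizSum_eq (a : Fin 7) {n : ℕ} {L : List LeibnizTerm}
    (hL : ∀ T ∈ L, T.IsAdmissible n) :
    ∃ L' : List LeibnizTerm, (∀ T ∈ L', T.IsAdmissible (n + 1)) ∧
      ∀ f g, SmoothOffAxis f → SmoothOffAxis g → ∀ t x, x ≠ 0 →
        Zop a (leibnizSum L f g) t x = leibnizSum L' f g t x := by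
  induction L with
  | nil => exact ⟨[], by simp, fun _ _ _ _ _ _ _ => Zop_zero a⟩
  | cons T L ih =>
    obtain ⟨hTc, hTlen⟩ := hL T (by simp)
    obtain ⟨L', hL', hL'e⟩ := ih fun T' hT' => hL T' (by simp [hT'])
    obtain ⟨d, hd, hde⟩ := T.exists_Zop_eval_eq a hTc
    refine ⟨⟨d, T.left, T.right⟩ :: ⟨T.coeff, a :: T.left, T.right⟩ ::
      ⟨T.coeff, T.left, a :: T.right⟩ :: L', ?_, fun f g hf hg t x hx => ?_⟩
    · simp only [List.mem_cons]
      rintro T' (rfl | rfl | rfl | hT')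
      · exact ⟨hd, by dsimp only; omega⟩
      · exact ⟨hTc, by simp only [List.length_cons]; omega⟩
      · exact ⟨hTc, by simp only [List.length_cons]; omega⟩
      · exact hL' T' hT'
    · have hLc : ∀ T' ∈ L, IsCoeff T'.coeff := fun T' hT' => (hL T' (by simp [hT'])).1
      rw [leibnizSum_cons, Zop_add a (T.smoothOffAxis_eval hTc hf hg)
        (smoothOffAxis_leibnizSum hLc hf hg) hx, hde f g hf hg t x hx, hL'e f g hf hg t x hx]
      simp only [leibnizSum, List.map_cons, List.sum_cons]
      ring

lemma exists_Ziter_leibnizSum_eq (l : List (Fin 7)) {n : ℕ} {L : List LeibnizTerm}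
    (hL : ∀ T ∈ L, T.IsAdmissible n) :
    ∃ L' : List LeibnizTerm, (∀ T ∈ L', T.IsAdmissible (n + l.length)) ∧
      ∀ f g, SmoothOffAxis f → SmoothOffAxis g → ∀ t x, x ≠ 0 →
        Ziter l (leibnizSum L f g) t x = leibnizSum L' f g t x := by
  induction l with
  | nil => exact ⟨L, hL, fun _ _ _ _ _ _ _ => rfl⟩
  | cons a l ih =>
    obtain ⟨L', hL', hL'e⟩ := ih
    obtain ⟨L'', hL'', hL''e⟩ := exists_Zop_leibnizSum_eq a hL'
    refine ⟨L'', by simpa [← add_assoc] using hL'', fun f g hf hg t x hx => ?_⟩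
    have hLc : ∀ T ∈ L, IsCoeff T.coeff := fun T hT => (hL T hT).1
    have hL'c : ∀ T ∈ L', IsCoeff T.coeff := fun T hT => (hL' T hT).1
    exact (Zop_congr a ((smoothOffAxis_leibnizSum hLc hf hg).ziter l)
      (smoothOffAxis_leibnizSum hL'c hf hg) (hL'e f g hf hg) hx).trans (hL''e f g hf hg t x hx)

lemma exists_abs_leibnizSum_le {n : ℕ} {L : List LeibnizTerm}
    (hL : ∀ T ∈ L, T.IsAdmissible n) :
    ∃ B, ∀ f g t (x : E3) R, 1 ≤ ‖x‖ →
      (∀ ν₁ ν₂ : List (Fin 7), ν₁.length + ν₂.length ≤ n →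
        |Ziter ν₁ f t x| * |Ziter ν₂ g t x| ≤ R) →
      |leibnizSum L f g t x| ≤ B * R := by
  induction L with
  | nil => exact ⟨0, fun _ _ _ _ _ _ _ => by simp [leibnizSum]⟩
  | cons T L ih =>
    obtain ⟨hTc, hTlen⟩ := hL T (by simp)
    obtain ⟨B, hB⟩ := ih fun T' hT' => hL T' (by simp [hT'])
    obtain ⟨C, hC, hCb⟩ := hTc.exists_bound
    refine ⟨C + B, fun f g t x R hx hR => ?_⟩
    have hT : |T.eval f g t x| ≤ C * R := by
      rw [LeibnizTerm.eval, abs_mul, abs_mul]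
      exact mul_le_mul (hCb x hx) (hR _ _ hTlen) (by positivity) hC
    rw [leibnizSum_cons, add_mul]
    exact (abs_add_le _ _).trans (add_le_add hT (hB f g t x R hx hR))

end LeibnizSum

theorem IsCoeff.exists_abs_Ziter_mul_le {c : E3 → ℝ} (hc : IsCoeff c) (l : List (Fin 7)) :
    ∃ B, ∀ f g, SmoothOffAxis f → SmoothOffAxis g → ∀ t (x : E3) R, 1 ≤ ‖x‖ →
      (∀ ν₁ ν₂ : List (Fin 7), ν₁.length + ν₂.length ≤ l.length →
        |Ziter ν₁ f t x| * |Ziter ν₂ g t x| ≤ R) →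
      |Ziter l (fun t x => c x * (f t x * g t x)) t x| ≤ B * R := by
  have h₀ : ∀ T ∈ [(⟨c, [], []⟩ : LeibnizTerm)], T.IsAdmissible 0 := by
    simpa [LeibnizTerm.IsAdmissible] using hc
  obtain ⟨L, hL, hLe⟩ := exists_Ziter_leibnizSum_eq l h₀
  obtain ⟨B, hB⟩ := exists_abs_leibnizSum_le hL
  refine ⟨B, fun f g hf hg t x R hx hR => ?_⟩
  have hsingle : leibnizSum [⟨c, [], []⟩] f g = fun t x => c x * (f t x * g t x) := by
    funext t x
    exact add_zero _
  rw [← hsingle, hLe f g hf hg t x (norm_pos_iff.1 (zero_lt_one.trans_le hx))]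
  exact hB f g t x R hx (by simpa using hR)

lemma pd_eq_gd_add (α : Fin 4) (w : SF) (t : ℝ) (x : E3) :
    pd α w t x = gd α w t x + omg α x * pr w t x := by
  fin_cases α <;> simp [pd, gd, omg, pang]

lemma pr_eq_sum (w : SF) (t : ℝ) (x : E3) :
    pr w t x = ∑ i : Fin 3, omg i.succ x * pd i.succ w t x := by
  simp [pr, Fin.sum_univ_three, omg, pd]

lemma isCoeff_omg (α : Fin 4) : IsCoeff (omg α) := by
  fin_cases α
  · exact IsCoeff.const (-1)
  · exact IsCoeff.coord_div_norm 0
  · exact IsCoeff.coord_div_norm 1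
  · exact IsCoeff.coord_div_norm 2

lemma omg_lightlike {x : E3} (hx : x ≠ 0) :
    omg 0 x ^ 2 - omg 1 x ^ 2 - omg 2 x ^ 2 - omg 3 x ^ 2 = 0 := by
  have hn : ‖x‖ ≠ 0 := norm_ne_zero_iff.2 hx
  have hsq : ‖x‖ ^ 2 = x 0 ^ 2 + x 1 ^ 2 + x 2 ^ 2 := by
    simp [EuclideanSpace.norm_sq_eq, Fin.sum_univ_three]
  simp only [omg, Matrix.cons_val_zero, Matrix.cons_val_one, Matrix.cons_val, even_two,
    Even.neg_pow, one_pow]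
  field_simp
  linarith

lemma sum_mul_pd_mul_pd_eq (A : Fin 4 → Fin 4 → ℝ) (U V : SF) (t : ℝ) (x : E3)
    (hA : ∑ α, ∑ β, A α β * omg α x * omg β x = 0) :
    ∑ α, ∑ β, A α β * pd α U t x * pd β V t x
      = ∑ α, ∑ β, A α β * (gd α U t x * pd β V t x)
        + ∑ i : Fin 3, ∑ β, (∑ γ, A γ β * omg γ x) * omg i.succ x
            * (pd i.succ U t x * gd β V t x) := by
  have hterm : ∀ α β, A α β * pd α U t x * pd β V t x
      = A α β * (gd α U t x * pd β V t x) + A α β * omg α x * pr U t x * gd β V t x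
        + A α β * omg α x * omg β x * (pr U t x * pr V t x) := by
    intro α β
    rw [pd_eq_gd_add α U, pd_eq_gd_add β V]
    ring
  simp only [hterm, Finset.sum_add_distrib, ← Finset.sum_mul, hA, zero_mul, add_zero]
  congr 1
  simp only [pr_eq_sum, Fin.sum_univ_four, Fin.sum_univ_three]
  ring

namespace SmoothOffAxis

variable {g : SF}

lemma pd (hg : SmoothOffAxis g) (α : Fin 4) : SmoothOffAxis (pd α g) := by
  fin_cases α
  · exact hg.zop 0
  · exact hg.zop 1
  · exact hg.zop 2
  · exact hg.zop 3

lemma gd (hg : SmoothOffAxis g) (α : Fin 4) : SmoothOffAxis (gd α g) := by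
  have h : SmoothOffAxis fun t x =>
      _root_.pd α g t x - omg α x * ∑ i : Fin 3, omg i.succ x * _root_.pd i.succ g t x :=
    (hg.pd α).sub ((isCoeff_omg α).smoothOffAxis.mul
      (SmoothOffAxis.sum _ fun i _ => (isCoeff_omg i.succ).smoothOffAxis.mul (hg.pd i.succ)))
  refine h.congr fun ⟨t, x⟩ _ => ?_
  change _root_.gd α g t x = _root_.pd α g t x - omg α x * _
  rw [← pr_eq_sum, pd_eq_gd_add α g]
  ring

end SmoothOffAxis

section NullForm

variable {M : ℕ}

def NullCondition (A : Fin M → Fin M → Fin M → Fin 4 → Fin 4 → ℝ) : Prop :=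
  ∀ ξ : Fin 4 → ℝ, ξ 0 ^ 2 - ξ 1 ^ 2 - ξ 2 ^ 2 - ξ 3 ^ 2 = 0 →
    ∀ I J K, ∑ α, ∑ β, A I J K α β * ξ α * ξ β = 0

def nullForm (A : Fin M → Fin M → Fin M → Fin 4 → Fin 4 → ℝ) (I : Fin M)
    (u v : ℝ → E3 → Fin M → ℝ) : SF := fun s y =>
  ∑ J, ∑ K, ∑ α, ∑ β, A I J K α β * pd α (comp u J) s y * pd β (comp v K) s y

def nullTerm (A : Fin M → Fin M → Fin M → Fin 4 → Fin 4 → ℝ) (I : Fin M)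
    (u v : ℝ → E3 → Fin M → ℝ) :
    (Fin M × Fin M × Fin 4 × Fin 4) ⊕ (Fin M × Fin M × Fin 3 × Fin 4) → SF
  | .inl (J, K, α, β) => fun t x =>
      A I J K α β * (gd α (comp u J) t x * pd β (comp v K) t x)
  | .inr (J, K, i, β) => fun t x =>
      ((∑ γ, A I J K γ β * omg γ x) * omg i.succ x) *
        (pd i.succ (comp u J) t x * gd β (comp v K) t x)

lemma nullForm_eq_sum_nullTerm (A : Fin M → Fin M → Fin M → Fin 4 → Fin 4 → ℝ)
    (hnull : NullCondition A)
    (I : Fin M) (u v : ℝ → E3 → Fin M → ℝ) {t : ℝ} {x : E3} (hx : x ≠ 0) :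
    nullForm A I u v t x = ∑ r, nullTerm A I u v r t x := by
  simp only [nullForm, Fintype.sum_sum_type, Fintype.sum_prod_type, nullTerm,
    ← Finset.sum_add_distrib]
  refine Finset.sum_congr rfl fun J _ => Finset.sum_congr rfl fun K _ => ?_
  exact sum_mul_pd_mul_pd_eq _ _ _ t x (hnull _ (omg_lightlike hx) I J K)

/-- With `D = gd` this is `ZgoodAfter`, with `D = pd` it is `ZgradAfter`. -/
def zAfter (D : Fin 4 → SF → SF) (N : ℕ) (u : ℝ → E3 → Fin M → ℝ) : SF := fun t x =>
  ∑ n ∈ Finset.range (N + 1), ∑ μ : Fin n → Fin 7, ∑ I,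
    √(∑ β, (Ziter (List.ofFn μ) (D β (comp u I)) t x) ^ 2)

lemma zAfter_nonneg (D : Fin 4 → SF → SF) (N : ℕ) (u : ℝ → E3 → Fin M → ℝ) (t : ℝ) (x : E3) :
    0 ≤ zAfter D N u t x := by
  unfold zAfter; positivity

lemma abs_Ziter_le_zAfter (D : Fin 4 → SF → SF) (u : ℝ → E3 → Fin M → ℝ)
    {ν : List (Fin 7)} {N : ℕ} (hν : ν.length ≤ N) (α : Fin 4) (J : Fin M) (t : ℝ) (x : E3) :
    |Ziter ν (D α (comp u J)) t x| ≤ zAfter D N u t x := by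
  set F : List (Fin 7) → ℝ := fun l => ∑ I, √(∑ β, (Ziter l (D β (comp u I)) t x) ^ 2)
  calc |Ziter ν (D α (comp u J)) t x|
      ≤ √(∑ β, (Ziter ν (D β (comp u J)) t x) ^ 2) :=
        Real.abs_le_sqrt (Finset.single_le_sum (f := fun β => (Ziter ν (D β (comp u J)) t x) ^ 2)
          (fun _ _ => sq_nonneg _) (Finset.mem_univ α))
    _ ≤ F ν := Finset.single_le_sum (f := fun I => √(∑ β, (Ziter ν (D β (comp u I)) t x) ^ 2))
          (fun _ _ => Real.sqrt_nonneg _) (Finset.mem_univ J)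
    _ = F (List.ofFn ν.get) := by rw [List.ofFn_get]
    _ ≤ ∑ μ : Fin ν.length → Fin 7, F (List.ofFn μ) :=
        Finset.single_le_sum (f := fun μ => F (List.ofFn μ)) (fun _ _ => by positivity)
          (Finset.mem_univ _)
    _ ≤ _ := Finset.single_le_sum (f := fun n => ∑ μ : Fin n → Fin 7, F (List.ofFn μ))
          (fun _ _ => by positivity) (Finset.mem_range.2 (Nat.lt_succ_of_le hν))

def mixedBound (D₁ D₂ : Fin 4 → SF → SF) (N : ℕ) (u v : ℝ → E3 → Fin M → ℝ) : SF :=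
  fun t x => zAfter D₁ N u t x * zAfter D₂ (N / 2) v t x
    + zAfter D₁ (N / 2) u t x * zAfter D₂ N v t x

lemma mixedBound_nonneg (D₁ D₂ : Fin 4 → SF → SF) (N : ℕ) (u v : ℝ → E3 → Fin M → ℝ)
    (t : ℝ) (x : E3) : 0 ≤ mixedBound D₁ D₂ N u v t x := by
  unfold mixedBound zAfter; positivity

/-- Of two lists with total length at most `N`, one has length at most `N / 2`. -/
lemma abs_Ziter_mul_abs_Ziter_le_mixedBound (D₁ D₂ : Fin 4 → SF → SF) {N : ℕ}
    {u v : ℝ → E3 → Fin M → ℝ} {ν₁ ν₂ : List (Fin 7)} (hν : ν₁.length + ν₂.length ≤ N)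
    (α β : Fin 4) (J K : Fin M) (t : ℝ) (x : E3) :
    |Ziter ν₁ (D₁ α (comp u J)) t x| * |Ziter ν₂ (D₂ β (comp v K)) t x|
      ≤ mixedBound D₁ D₂ N u v t x := by
  have h₁ := mul_nonneg (zAfter_nonneg D₁ N u t x) (zAfter_nonneg D₂ (N / 2) v t x)
  have h₂ := mul_nonneg (zAfter_nonneg D₁ (N / 2) u t x) (zAfter_nonneg D₂ N v t x)
  unfold mixedBound
  rcases (by omega : ν₂.length ≤ N / 2 ∨ ν₁.length ≤ N / 2) with h | h
  · have := mul_le_mul (abs_Ziter_le_zAfter D₁ u (le_of_add_le_left hν) α J t x)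
      (abs_Ziter_le_zAfter D₂ v h β K t x) (abs_nonneg _) (zAfter_nonneg D₁ N u t x)
    linarith
  · have := mul_le_mul (abs_Ziter_le_zAfter D₁ u h α J t x)
      (abs_Ziter_le_zAfter D₂ v (le_of_add_le_right hν) β K t x) (abs_nonneg _)
      (zAfter_nonneg D₁ _ u t x)
    linarith

def nullFormBound (N : ℕ) (u v : ℝ → E3 → Fin M → ℝ) : SF :=
  fun t x => mixedBound gd pd N u v t x + mixedBound pd gd N u v t x

section NullFormBounds

variable (A : Fin M → Fin M → Fin M → Fin 4 → Fin 4 → ℝ) (I : Fin M)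
  {u v : ℝ → E3 → Fin M → ℝ}

lemma isCoeff_sum_mul_omg_mul_omg (a : Fin 4 → ℝ) (i : Fin 4) :
    IsCoeff fun x => (∑ γ, a γ * omg γ x) * omg i x :=
  (IsCoeff.sum _ fun γ _ => (IsCoeff.const (a γ)).mul (isCoeff_omg γ)).mul (isCoeff_omg i)

lemma smoothOffAxis_nullForm (hu : ∀ J, SmoothOffAxis (comp u J))
    (hv : ∀ K, SmoothOffAxis (comp v K)) : SmoothOffAxis (nullForm A I u v) :=
  SmoothOffAxis.sum _ fun J _ => SmoothOffAxis.sum _ fun K _ => SmoothOffAxis.sum _ fun α _ =>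
    SmoothOffAxis.sum _ fun β _ =>
      ((IsCoeff.const _).smoothOffAxis.mul ((hu J).pd α)).mul ((hv K).pd β)

lemma smoothOffAxis_nullTerm (hu : ∀ J, SmoothOffAxis (comp u J))
    (hv : ∀ K, SmoothOffAxis (comp v K)) (r) : SmoothOffAxis (nullTerm A I u v r) := by
  rcases r with ⟨J, K, α, β⟩ | ⟨J, K, i, β⟩
  · exact (IsCoeff.const _).smoothOffAxis.mul (((hu J).gd α).mul ((hv K).pd β))
  · exact (isCoeff_sum_mul_omg_mul_omg _ i.succ).smoothOffAxis.mul
      (((hu J).pd i.succ).mul ((hv K).gd β))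

lemma exists_abs_Ziter_nullTerm_le {N : ℕ} {l : List (Fin 7)} (hl : l.length ≤ N) (r) :
    ∃ B, ∀ u v : ℝ → E3 → Fin M → ℝ, (∀ J, SmoothOffAxis (comp u J)) →
      (∀ K, SmoothOffAxis (comp v K)) → ∀ t (x : E3), 1 ≤ ‖x‖ →
        |Ziter l (nullTerm A I u v r) t x| ≤ B * nullFormBound N u v t x := by
  rcases r with ⟨J, K, α, β⟩ | ⟨J, K, i, β⟩
  · obtain ⟨B, hB⟩ := (IsCoeff.const (A I J K α β)).exists_abs_Ziter_mul_le l
    exact ⟨B, fun u v hu hv t x hx => hB _ _ ((hu J).gd α) ((hv K).pd β) t x _ hx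
      fun ν₁ ν₂ hν => (abs_Ziter_mul_abs_Ziter_le_mixedBound gd pd (hν.trans hl) α β J K t x).trans
        (le_add_of_nonneg_right (mixedBound_nonneg pd gd N u v t x))⟩
  · obtain ⟨B, hB⟩ := (isCoeff_sum_mul_omg_mul_omg (A I J K · β) i.succ).exists_abs_Ziter_mul_le l
    exact ⟨B, fun u v hu hv t x hx => hB _ _ ((hu J).pd i.succ) ((hv K).gd β) t x _ hx
      fun ν₁ ν₂ hν => (abs_Ziter_mul_abs_Ziter_le_mixedBound pd gd (hν.trans hl) _ β J K t x).trans
        (le_add_of_nonneg_left (mixedBound_nonneg gd pd N u v t x))⟩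

theorem exists_abs_Ziter_nullForm_le
    (hnull : NullCondition A)
    {N : ℕ} {l : List (Fin 7)} (hl : l.length ≤ N) :
    ∃ B, ∀ u v : ℝ → E3 → Fin M → ℝ, (∀ J, SmoothOffAxis (comp u J)) →
      (∀ K, SmoothOffAxis (comp v K)) → ∀ t (x : E3), 1 ≤ ‖x‖ →
        |Ziter l (nullForm A I u v) t x| ≤ B * nullFormBound N u v t x := by
  choose B hB using exists_abs_Ziter_nullTerm_le A I hl
  refine ⟨∑ r, B r, fun u v hu hv t x hx => ?_⟩
  have hx₀ : x ≠ 0 := norm_pos_iff.1 (zero_lt_one.trans_le hx)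
  have hterm := smoothOffAxis_nullTerm A I hu hv
  rw [Ziter_congr l (smoothOffAxis_nullForm A I hu hv) (SmoothOffAxis.sum _ fun r _ => hterm r)
    (fun t x hx => nullForm_eq_sum_nullTerm A hnull I u v hx) hx₀,
    Ziter_sum l _ (fun r _ => hterm r) hx₀, Finset.sum_mul]
  exact (Finset.abs_sum_le_sum_abs _ _).trans
    (Finset.sum_le_sum fun r _ => hB r u v hu hv t x hx)

end NullFormBounds

end NullForm

/-- null-form estimate for the semilinear terms ((3.1) in the paper). -/
theorem null_form_estimate_A (M N : ℕ)
    (A : Fin M → Fin M → Fin M → Fin 4 → Fin 4 → ℝ)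
    (hnull : ∀ ξ : Fin 4 → ℝ, ξ 0 ^ 2 - ξ 1 ^ 2 - ξ 2 ^ 2 - ξ 3 ^ 2 = 0 →
      ∀ I J K, ∑ α, ∑ β, A I J K α β * ξ α * ξ β = 0) :
    ∃ C : ℝ, 0 < C ∧
      ∀ (u v : ℝ → E3 → Fin M → ℝ),
      (∀ J, ContDiff ℝ (⊤ : ℕ∞) (Function.uncurry (comp u J))) →
      (∀ K, ContDiff ℝ (⊤ : ℕ∞) (Function.uncurry (comp v K))) →
      ∀ t x, 0 ≤ t → 1 ≤ ‖x‖ → ∀ I : Fin M,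
      (∑ n ∈ Finset.range (N+1), ∑ μ : Fin n → Fin 7,
        |Ziter (List.ofFn μ) (fun s y =>
          ∑ J, ∑ K, ∑ α, ∑ β, A I J K α β * pd α (comp u J) s y * pd β (comp v K) s y) t x|)
        ≤ C * (ZgoodAfter N u t x * ZgradAfter (N/2) v t x
            + ZgoodAfter (N/2) u t x * ZgradAfter N v t x
            + ZgradAfter N u t x * ZgoodAfter (N/2) v t x
            + ZgradAfter (N/2) u t x * ZgoodAfter N v t x) := by
  choose B hB using fun I (n : Fin (N + 1)) (μ : Fin n → Fin 7) =>
    exists_abs_Ziter_nullForm_le A I hnull (l := List.ofFn μ) (by simpa using Nat.lt_succ_iff.1 n.2)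
  set C := ∑ I, ∑ n, ∑ μ, |B I n μ|
  refine ⟨1 + C, by positivity, fun u v hu hv t x _ hx I => ?_⟩
  have hR := add_nonneg (mixedBound_nonneg gd pd N u v t x) (mixedBound_nonneg pd gd N u v t x)
  have hCI : ∑ n, ∑ μ, |B I n μ| ≤ 1 + C := by
    have := Finset.single_le_sum (f := fun I => ∑ n, ∑ μ, |B I n μ|) (fun _ _ => by positivity)
      (Finset.mem_univ I)
    linarith
  calc _ = ∑ n : Fin (N + 1), ∑ μ : Fin n → Fin 7, |Ziter (List.ofFn μ) (nullForm A I u v) t x| :=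
        Finset.sum_range _
    _ ≤ ∑ n, ∑ μ, |B I n μ| * nullFormBound N u v t x := by
        gcongr with n _ μ _
        exact (hB I n μ u v (fun J => (hu J).contDiffOn) (fun K => (hv K).contDiffOn) t x hx).trans
          (mul_le_mul_of_nonneg_right (le_abs_self _) hR)
    _ ≤ (1 + C) * nullFormBound N u v t x := by
        simp only [← Finset.sum_mul]
        exact mul_le_mul_of_nonneg_right hCI hR
    _ = _ := congrArg _ (add_assoc _ _ _).symm
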